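/- arXiv:2305.00167 — 12 statements merged into one kernel-verified Lean document; each statement's English description precedes it below -/
import Mathlib

section
/- In a presheaf category Set^(A^op), for morphisms g : Z → Y and f : Y → X, the pushforward Π_f Z exists and its value at an object a of A is naturally isomorphic to the coproduct over all σ : y(a) → X of the set of morphisms over Y from the pullback of Y along σ to Z, where y(a) is the representable presheaf at a. -/
/-!
The slice `Ĥ/X` is again a presheaf category (presheaves on the category of elements of `X`),
hence cartesian closed. In a category with pullbacks, pulling back along `f : Y ⟶ X` is
`- × f` in `Ĥ/X` followed by the equivalence `(Ĥ/X)/f ≌ Ĥ/Y`, and `- × f` has the right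
adjoint taking sections of `V ⟶ f`, i.e. the pullback of `f ⟹ V ⟶ f ⟹ f` along the name
of the identity. The formula is then Yoneda followed by this adjunction: an element of
`Π_f Z` at `a` is a map `y(a) ⟶ Π_f Z`, i.e. a map `σ : y(a) ⟶ X` together with a map
`σ ⟶ Π_f Z` over `X`, i.e. a map `σ^* Y ⟶ Z` over `Y`.
-/

open CategoryTheory Limits Opposite

universe u

namespace CategoryTheory

variable {C : Type*} [Category C]

section

attribute [local instance] ChosenPullbacksAlong.cartesianMonoidalCategoryOver
  BraidedCategory.ofCartesianMonoidalCategory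

theorem ChosenPullbacksAlong.isLeftAdjoint_pullback_of_monoidalClosed [ChosenPullbacks C]
    {X Y : C} (f : Y ⟶ X) [MonoidalClosed (Over X)] : (pullback f).IsLeftAdjoint := by
  let : ChosenPullbacks (Over X) := fun g => ofHasPullbacksAlong g
  exact ⟨_, ⟨((Over.toOverSectionsAdj (Over.mk f)).comp
    (Over.mk f).iteratedSliceEquiv.toAdjunction).ofNatIsoLeft
      (toOverIteratedSliceForwardIsoPullback f)⟩⟩

end

instance Over.isLeftAdjoint_pullback_presheaf {A : Type u} [SmallCategory A]
    {X Y : Aᵒᵖ ⥤ Type u} (f : Y ⟶ X) : (Over.pullback f).IsLeftAdjoint := by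
  let : ChosenPullbacks (Aᵒᵖ ⥤ Type u) := fun g => ChosenPullbacksAlong.ofHasPullbacksAlong g
  let : CartesianMonoidalCategory (Over X) := ChosenPullbacksAlong.cartesianMonoidalCategoryOver X
  let : MonoidalClosed (Over X) :=
    cartesianClosedOfEquiv (overEquivPresheafCostructuredArrow X).symm
  have := ChosenPullbacksAlong.isLeftAdjoint_pullback_of_monoidalClosed f
  exact Functor.isLeftAdjoint_of_iso (ChosenPullbacksAlong.pullbackIsoOverPullback f)

def Over.homEquivSigma {X T : C} (P : Over X) :
    (T ⟶ P.left) ≃ Σ σ : T ⟶ X, (Over.mk σ ⟶ P) where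
  toFun u := ⟨u ≫ P.hom, Over.homMk u rfl⟩
  invFun x := x.2.left
  left_inv _ := rfl
  right_inv := by
    rintro ⟨σ, ⟨u, _, w⟩⟩
    change T ⟶ P.left at u
    obtain rfl : u ≫ P.hom = σ := by simpa using w
    rfl

noncomputable def Adjunction.homEquivSigmaPullback [HasPullbacks C] {X Y T : C} {f : Y ⟶ X}
    {Pi : Over Y ⥤ Over X} (adj : Over.pullback f ⊣ Pi) (V : Over Y) :
    (T ⟶ (Pi.obj V).left) ≃ Σ σ : T ⟶ X, (Over.mk (pullback.snd σ f) ⟶ V) :=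
  (Pi.obj V).homEquivSigma.trans
    (Equiv.sigmaCongrRight fun σ => (adj.homEquiv (Over.mk σ) V).symm)

end CategoryTheory

/-- In a presheaf category `Set^(Aᵒᵖ)`, for `g : Z ⟶ Y` and `f : Y ⟶ X`, the pushforward
`Π_f` (right adjoint to pullback along `f`) exists, and its value on `Z` at an object `a`
is isomorphic to the coproduct over `σ : y(a) ⟶ X` of the set of morphisms over `Y` from
the pullback of `Y` along `σ` to `Z`. -/
theorem presheaf_pi_formula {A : Type u} [SmallCategory A] {X Y Z : Aᵒᵖ ⥤ Type u}
    (g : Z ⟶ Y) (f : Y ⟶ X) :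
    ∃ (Pi : Over Y ⥤ Over X) (_ : Over.pullback f ⊣ Pi), ∀ a : A,
      Nonempty ((Pi.obj (Over.mk g)).left.obj (op a) ≃
        Σ σ : yoneda.obj a ⟶ X, (Over.mk (pullback.snd σ f) ⟶ Over.mk g)) := by
  let adj := Adjunction.ofIsLeftAdjoint (Over.pullback f)
  exact ⟨_, adj, fun _ => ⟨yonedaEquiv.symm.trans (adj.homEquivSigmaPullback (Over.mk g))⟩⟩
end

section
/- Let F : A → E be a fully faithful dense functor where E has pullbacks, and let F* : E → Set^(A^op) be the induced singular functor. Then F* preserves exponentials: for every exponentiable morphism f : B → A in E and every object C over B, F*(Π_f C) ≅ Π_{F*f}(F* C). -/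
open CategoryTheory Limits

universe v u₁ u₂

variable {A : Type u₁} [Category.{v} A] {E : Type u₂} [Category.{v} E]

/-- The canonical cocone over `F/X → A → E` with cocone point `X`. -/
@[simps]
def canonicalCocone (F : A ⥤ E) (X : E) : Cocone (CostructuredArrow.proj F X ⋙ F) where
  pt := X
  ι :=
    { app := fun Y => Y.hom
      naturality := by
        intro Y Z m
        simp [CostructuredArrow.w m]
        exact (CostructuredArrow.w m).trans (Category.comp_id _).symm }

/-- A functor `F : A ⥤ E` is dense if for every object `X` of `E` the canonical cocone
`colim (F/X → A → E) → X` is a colimit. -/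
def IsDenseFunctor (F : A ⥤ E) : Prop :=
  ∀ X : E, Nonempty (IsColimit (canonicalCocone F X))

/-- The singular functor `F* : E ⥤ Set^(Aᵒᵖ)` induced by `F : A ⥤ E`. -/
def singularFunctor (F : A ⥤ E) : E ⥤ (Aᵒᵖ ⥤ Type v) :=
  yoneda ⋙ (Functor.whiskeringLeft Aᵒᵖ Eᵒᵖ (Type v)).obj F.op

/-!
`F*` sends `F a` to the representable `y a` (as `F` is fully faithful) and is itself fully
faithful (as `F` is dense), so every representable `y a ⟶ F* A'` over `F* A'` is the image
under `F*` of some `F a ⟶ A'`. For every `Z` over `A'`, naturally in `Z`,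
`Hom(F* Z, F*(Π_f C)) ≅ Hom(Z, Π_f C) ≅ Hom(f^* Z, C) ≅ Hom(F*(f^* Z), F* C)
  ≅ Hom((F* f)^*(F* Z), F* C) ≅ Hom(F* Z, Π_{F* f}(F* C))`,
where the fourth step uses that `F*` preserves pullbacks. An object over a presheaf is
determined by its maps from representables, so `F*(Π_f C) ≅ Π_{F* f}(F* C)`.
-/

noncomputable def Over.postCompPullbackIso {C D : Type*} [Category C] [Category D]
    [HasPullbacks C] [HasPullbacks D] (G : C ⥤ D) [PreservesLimitsOfShape WalkingCospan G]
    {X Y : C} (f : X ⟶ Y) :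
    Over.post G ⋙ Over.pullback (G.map f) ≅ Over.pullback f ⋙ Over.post G :=
  NatIso.ofComponents
    (fun Z => Over.isoMk (PreservesPullback.iso G Z.hom f).symm (by simp [Over.post]))
    (fun {Z Z'} k => by
      ext
      -- the cospans of `Over.post` and `Over.pullback` only match the `pullback` lemmas up to
      -- unfolding, hence the `show` and `erw`
      show pullback.lift _ _ _ ≫ (PreservesPullback.iso G Z'.hom f).inv
        = (PreservesPullback.iso G Z.hom f).inv ≫ G.map (pullback.lift _ _ _)
      rw [Iso.comp_inv_eq, Category.assoc]
      apply pullback.hom_ext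
      · erw [pullback.lift_fst]
        simp only [Category.assoc, PreservesPullback.iso_hom_fst, ← G.map_comp, pullback.lift_fst]
        rw [G.map_comp, PreservesPullback.iso_inv_fst_assoc]
        rfl
      · erw [pullback.lift_snd]
        simp only [Category.assoc, PreservesPullback.iso_hom_snd, ← G.map_comp, pullback.lift_snd,
          PreservesPullback.iso_inv_snd]
        rfl)

noncomputable def Adjunction.restrictedYonedaRightAdjointIso
    {C C' D D' : Type*} [Category C] [Category C'] [Category D] [Category D']
    {L : C ⥤ C'} {R : C' ⥤ C} {L' : D ⥤ D'} {R' : D' ⥤ D} (adj : L ⊣ R) (adj' : L' ⊣ R')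
    {G : C ⥤ D} {G' : C' ⥤ D'} (hG : G.FullyFaithful) (hG' : G'.FullyFaithful)
    (comm : G ⋙ L' ≅ L ⋙ G') (c : C') :
    G.op ⋙ yoneda.obj (G.obj (R.obj c)) ≅ G.op ⋙ yoneda.obj (R'.obj (G'.obj c)) :=
  NatIso.ofComponents
    (fun Z => Equiv.toIso <|
      hG.homEquiv.symm.trans <|
      (adj.homEquiv _ _).symm.trans <|
      hG'.homEquiv.trans <|
      (Iso.homCongr (comm.app Z.unop).symm (Iso.refl _)).trans <|
      adj'.homEquiv _ _)
    (fun k => by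
      ext r
      simp only [Functor.comp_obj, Functor.op_obj, yoneda_obj_obj, Functor.comp_map,
        Functor.op_map, yoneda_obj_map, Quiver.Hom.unop_op, TypeCat.Fun.toFun_apply, comp_apply,
        TypeCat.hom_ofHom, TypeCat.Fun.coe_mk, Equiv.toIso_hom_hom_apply, Equiv.trans_apply,
        Functor.FullyFaithful.homEquiv_symm_apply, Functor.FullyFaithful.preimage_comp,
        Functor.FullyFaithful.preimage_map, Adjunction.homEquiv_naturality_left_symm,
        Functor.FullyFaithful.homEquiv_apply, Functor.map_comp, Iso.homCongr_apply, Iso.symm_inv,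
        Iso.app_hom, Iso.refl_hom, Category.comp_id]
      have comm_k : comm.hom.app _ ≫ G'.map (L.map k.unop) =
          L'.map (G.map k.unop) ≫ comm.hom.app _ :=
        (comm.hom.naturality k.unop).symm
      rw [reassoc_of% comm_k]
      exact adj'.homEquiv_naturality_left _ _)

noncomputable def Functor.restrictedYonedaIsoOfEssImage {J C D : Type*} [Category J]
    [Category C] [Category D] (T : J ⥤ D) (G : C ⥤ D) [G.Full] [G.Faithful]
    (hT : ∀ j, G.essImage (T.obj j)) {X Y : D}
    (e : G.op ⋙ yoneda.obj X ≅ G.op ⋙ yoneda.obj Y) :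
    T.op ⋙ yoneda.obj X ≅ T.op ⋙ yoneda.obj Y :=
  Functor.isoWhiskerRight (NatIso.op (Functor.essImage.liftFunctorCompIso T G hT)) _ ≪≫
    Functor.isoWhiskerLeft (Functor.essImage.liftFunctor T G hT).op e ≪≫
    Functor.isoWhiskerRight (NatIso.op (Functor.essImage.liftFunctorCompIso T G hT)).symm
      (yoneda.obj Y)

/-- `Over P` is equivalent to the presheaves on `CostructuredArrow yoneda P`, by an equivalence
turning `CostructuredArrow.toOver yoneda P` into the Yoneda embedding, where the Yoneda lemma
applies. -/
noncomputable def Over.isoOfToOverYonedaIso {C : Type*} [Category.{v} C] {P : Cᵒᵖ ⥤ Type v}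
    {X Y : Over P}
    (e : (CostructuredArrow.toOver yoneda P).op ⋙ yoneda.obj X ≅
      (CostructuredArrow.toOver yoneda P).op ⋙ yoneda.obj Y) :
    X ≅ Y :=
  (overEquivPresheafCostructuredArrow P).fullyFaithfulFunctor.preimageIso <|
    (fullyFaithfulULiftFunctor.whiskeringRight _).preimageIso <|
      (yonedaOpCompYonedaObj _).symm ≪≫ (CostructuredArrow.toOverCompYoneda P X).symm ≪≫
        e ≪≫ CostructuredArrow.toOverCompYoneda P Y ≪≫ yonedaOpCompYonedaObj _

instance {C D : Type*} [Category.{v} C] [Category.{v} D] (F : C ⥤ D) [F.Full] [F.Faithful]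
    (X : C) : IsIso (yonedaMap F X) := by
  have (Y : Cᵒᵖ) : IsIso ((yonedaMap F X).app Y) :=
    (isIso_iff_bijective _).2 ((Functor.FullyFaithful.ofFullyFaithful F).map_bijective _ _)
  exact NatIso.isIso_of_isIso_app _

theorem IsDenseFunctor.isDense {F : A ⥤ E} (hF : IsDenseFunctor F) : F.IsDense where
  isDenseAt X := (hF X).map fun h => h.ofIsoColimit (Cocone.ext (Iso.refl _) fun _ =>
    (Category.comp_id _).trans (Category.id_comp _).symm)

instance (F : A ⥤ E) [F.IsDense] : (singularFunctor F).Full := by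
  have : (singularFunctor F ⋙ (Functor.whiskeringRight _ _ _).obj uliftFunctor.{0}).Full :=
    inferInstanceAs (Presheaf.restrictedULiftYoneda.{0} F).Full
  exact Functor.Full.of_comp_faithful _ ((Functor.whiskeringRight _ _ _).obj uliftFunctor.{0})

instance (F : A ⥤ E) [F.IsDense] : (singularFunctor F).Faithful := by
  have : (singularFunctor F ⋙ (Functor.whiskeringRight _ _ _).obj uliftFunctor.{0}).Faithful :=
    inferInstanceAs (Presheaf.restrictedULiftYoneda.{0} F).Faithful
  exact Functor.Faithful.of_comp _ ((Functor.whiskeringRight _ _ _).obj uliftFunctor.{0})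

instance (F : A ⥤ E) : PreservesLimitsOfShape WalkingCospan (singularFunctor F) := by
  unfold singularFunctor; infer_instance

theorem yonedaMap_comp_singularFunctor_map (F : A ⥤ E) {a : A} {X : E} (x : F.obj a ⟶ X) :
    yonedaMap F a ≫ (singularFunctor F).map x = yonedaEquiv.symm x := by
  ext b t
  rfl

theorem toOver_obj_mem_essImage_post_singularFunctor (F : A ⥤ E) [F.Full] [F.Faithful] (X : E)
    (s : CostructuredArrow yoneda ((singularFunctor F).obj X)) :
    (Over.post (singularFunctor F)).essImage ((CostructuredArrow.toOver yoneda _).obj s) := by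
  let x : F.obj s.left ⟶ X := yonedaEquiv s.hom
  have w : yonedaMap F s.left ≫ (singularFunctor F).map x = s.hom := by
    rw [yonedaMap_comp_singularFunctor_map, Equiv.symm_apply_apply]
  -- `asIso` is elaborated without expected type: against it the `IsIso` instance is not found
  exact ⟨Over.mk x, ⟨(Over.isoMk (asIso (yonedaMap F s.left) :) w).symm⟩⟩

/-- For a fully faithful dense functor `F : A ⥤ E` into a category with pullbacks, the
singular functor `F*` preserves exponentials: for any exponentiable `f : B ⟶ A'` in `E`
(witnessed by a right adjoint `Pf ⊢ Δ_f`) and any right adjoint `Pg` of pullback along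
`F* f` in presheaves, one has `F*(Π_f C) ≅ Π_{F* f}(F* C)` over `F* A'`. -/
theorem singularFunctor_preserves_exponentials [HasPullbacks E]
    (F : A ⥤ E) [F.Full] [F.Faithful] (hF : IsDenseFunctor F)
    {B A' : E} (f : B ⟶ A')
    (Pf : Over B ⥤ Over A') (adj : Over.pullback f ⊣ Pf)
    (Pg : Over ((singularFunctor F).obj B) ⥤ Over ((singularFunctor F).obj A'))
    (adj' : Over.pullback ((singularFunctor F).map f) ⊣ Pg)
    (C : Over B) :
    Nonempty ((Over.post (singularFunctor F)).obj (Pf.obj C) ≅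
      Pg.obj ((Over.post (singularFunctor F)).obj C)) := by
  have := hF.isDense
  exact ⟨Over.isoOfToOverYonedaIso <|
    Functor.restrictedYonedaIsoOfEssImage _ _
      (toOver_obj_mem_essImage_post_singularFunctor F A') <|
      Adjunction.restrictedYonedaRightAdjointIso adj adj' (.ofFullyFaithful _) (.ofFullyFaithful _)
        (Over.postCompPullbackIso (singularFunctor F) f) C⟩
end

section
/- Let G : E → Ĥ be a fully faithful pullback-preserving functor between categories with pullbacks, where every morphism of Ĥ is exponentiable. If f : B → A is exponentiable in E, C → B is a morphism, and D is an object over A with G(D) ≅ Π_{G(f)} G(C) over G(A), then D ≅ Π_f C over A. -/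
/-!
Maps `Z ⟶ D` in `E/A` correspond, by full faithfulness of `G`, to maps `G Z ⟶ G D` in `Ĥ/G A`,
hence via the given isomorphism and the adjunction for `G f` to maps `(G f)^* (G Z) ⟶ G C`.
Since `G` preserves pullbacks, `(G f)^* (G Z) ≅ G (f^* Z)`, so by full faithfulness again these are
the maps `f^* Z ⟶ C`. Thus `D`, like `Π_f C`, represents `Z ↦ (f^* Z ⟶ C)`, and representing
objects are unique up to isomorphism.
-/

open CategoryTheory Limits

namespace CategoryTheory

noncomputable def Over.pullbackPostIso {E H : Type*} [Category E] [Category H]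
    [HasPullbacks E] [HasPullbacks H] (G : E ⥤ H) [PreservesLimitsOfShape WalkingCospan G]
    {A B : E} (f : B ⟶ A) :
    Over.pullback f ⋙ Over.post G ≅ Over.post G ⋙ Over.pullback (G.map f) :=
  NatIso.ofComponents
    (fun X => Over.isoMk (PreservesPullback.iso G X.hom f) (pullbackComparison_comp_snd G X.hom f))
    (fun {X Y} u => by
      ext
      change G.map (pullback.lift (pullback.fst X.hom f ≫ u.left) (pullback.snd X.hom f) _) ≫
          pullbackComparison G Y.hom f =
        pullbackComparison G X.hom f ≫
          pullback.lift (pullback.fst _ _ ≫ G.map u.left) (pullback.snd (G.map X.hom) (G.map f)) _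
      apply pullback.hom_ext
      · erw [Category.assoc, Category.assoc, pullbackComparison_comp_fst, pullback.lift_fst]
        rw [← G.map_comp, pullback.lift_fst, G.map_comp, pullbackComparison_comp_fst_assoc]
      · erw [Category.assoc, Category.assoc, pullbackComparison_comp_snd, pullback.lift_snd]
        rw [← G.map_comp, pullback.lift_snd, pullbackComparison_comp_snd])

def Adjunction.representableByOfFullyFaithful {X X' Y Y' : Type*} [Category X] [Category X']
    [Category Y] [Category Y'] {P : X ⥤ X'} {Q : Y ⥤ Y'} {L : X ⥤ Y} {L' : X' ⥤ Y'}
    {R' : Y' ⥤ X'} (adj' : L' ⊣ R') (hP : P.FullyFaithful) (hQ : Q.FullyFaithful)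
    (α : L ⋙ Q ≅ P ⋙ L') {C : Y} {D : X} (h : P.obj D ≅ R'.obj (Q.obj C)) :
    (L.op ⋙ yoneda.obj C).RepresentableBy D where
  homEquiv :=
    hP.homEquiv.trans <| h.homToEquiv.trans <| (adj'.homEquiv _ _).symm.trans <|
      (α.app _).symm.homFromEquiv.trans hQ.homEquiv.symm
  homEquiv_comp u g := hQ.map_injective <| by
    simpa [adj'.homEquiv_naturality_left_symm] using (α.hom.naturality_assoc u _).symm

end CategoryTheory

theorem reflects_exponentials_general {E : Type*} {H : Type*} [Category E] [Category H]
    [HasPullbacks E] [HasPullbacks H]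
    (G : E ⥤ H) [G.Full] [G.Faithful] [PreservesLimitsOfShape WalkingCospan G]
    {A B : E} (f : B ⟶ A)
    (Pf : Over B ⥤ Over A) (adj : Over.pullback f ⊣ Pf)
    (Pg : Over (G.obj B) ⥤ Over (G.obj A)) (adj' : Over.pullback (G.map f) ⊣ Pg)
    (C : Over B) (D : Over A)
    (h : (Over.post G).obj D ≅ Pg.obj ((Over.post G).obj C)) :
    Nonempty (D ≅ Pf.obj C) :=
  let hG : G.FullyFaithful := .ofFullyFaithful G
  ⟨(adj'.representableByOfFullyFaithful (hG.over A) (hG.over B) (Over.pullbackPostIso G f)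
    h).uniqueUpToIso (adj.representableBy C)⟩

/-- A fully faithful pullback-preserving functor `G : E ⥤ H` into a category in which every
morphism is exponentiable reflects exponentials: if `f : B ⟶ A` is exponentiable in `E`
(with right adjoint `Pf` to pullback), `C` is an object over `B`, and `D` is an object over
`A` with `G D ≅ Π_{G f}(G C)` over `G A`, then `D ≅ Π_f C` over `A`. -/
theorem reflects_exponentials {E : Type*} {H : Type*} [Category E] [Category H]
    [HasPullbacks E] [HasPullbacks H]
    (G : E ⥤ H) [G.Full] [G.Faithful] [PreservesLimitsOfShape WalkingCospan G]
    (hH : ∀ {X Y : H} (f : X ⟶ Y), (Over.pullback f).IsLeftAdjoint)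
    {A B : E} (f : B ⟶ A)
    (Pf : Over B ⥤ Over A) (adj : Over.pullback f ⊣ Pf)
    (Pg : Over (G.obj B) ⥤ Over (G.obj A)) (adj' : Over.pullback (G.map f) ⊣ Pg)
    (C : Over B) (D : Over A)
    (h : (Over.post G).obj D ≅ Pg.obj ((Over.post G).obj C)) :
    Nonempty (D ≅ Pf.obj C) :=
  reflects_exponentials_general G f Pf adj Pg adj' C D h
end

section
/- For E a category with pullbacks, polynomials in E (exponentiable morphisms) together with isomorphism classes of polynomial morphisms form a category Poly_E, i.e., the given composition of polynomial morphisms is associative and unital. -/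
open CategoryTheory Limits

universe v u

variable (E : Type u) [Category.{v} E] [HasPullbacks E]

/-- A polynomial in a category `E` with pullbacks: an exponentiable morphism. -/
structure PolyObj : Type (max u v) where
  dom : E
  cod : E
  map : dom ⟶ cod
  exp : (Over.pullback map).IsLeftAdjoint

variable {E}

/-- A morphism of polynomials `p → q`: a map on positions `base : P ⟶ Q` together with a map
on directions `lift : P ×_Q Q* ⟶ P*` lying over `P`.  (Since `E` has chosen pullbacks, such
pairs represent exactly the isomorphism classes of diagrams of the paper.) -/
structure PolyHom (p q : PolyObj E) : Type v where
  base : p.cod ⟶ q.cod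
  lift : pullback base q.map ⟶ p.dom
  w : lift ≫ p.map = pullback.fst base q.map

/-- The identity morphism of polynomials. -/
noncomputable def PolyHom.id (p : PolyObj E) : PolyHom p p where
  base := 𝟙 p.cod
  lift := pullback.snd (𝟙 p.cod) p.map
  w := by simpa using (pullback.condition (f := 𝟙 p.cod) (g := p.map)).symm

/-- Composition of morphisms of polynomials. -/
noncomputable def PolyHom.comp {p q r : PolyObj E} (φ : PolyHom p q) (ψ : PolyHom q r) : PolyHom p r where
  base := φ.base ≫ ψ.base
  lift :=
    pullback.lift (pullback.fst (φ.base ≫ ψ.base) r.map)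
      (pullback.map (φ.base ≫ ψ.base) r.map ψ.base r.map φ.base (𝟙 _) (𝟙 _)
        (by simp) (by simp) ≫ ψ.lift)
      (by rw [Category.assoc, ψ.w, pullback.lift_fst]) ≫ φ.lift
  w := by rw [Category.assoc, φ.w, pullback.lift_fst]

/-! A morphism of polynomials `φ : p → q` acts on generalized elements: a pair
`x : W ⟶ P`, `y : W ⟶ Q*` agreeing over `Q` is sent to `φ.liftAt x y : W ⟶ P*`.
A composite acts by the composite of the actions and the identity acts trivially, so
associativity and unitality come down to those of composition in `E`; each `lift` in the
statement is the action at the generic element of its pullback, and `pullback.congrHom` only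
transports that element. -/

namespace PolyHom

variable {p q r s : PolyObj E}

theorem comp_base (φ : PolyHom p q) (ψ : PolyHom q r) :
    (φ.comp ψ).base = φ.base ≫ ψ.base :=
  rfl

noncomputable def liftAt (φ : PolyHom p q) {W : E} (x : W ⟶ p.cod) (y : W ⟶ q.dom)
    (h : x ≫ φ.base = y ≫ q.map) : W ⟶ p.dom :=
  pullback.lift x y h ≫ φ.lift

theorem liftAt_map (φ : PolyHom p q) {W : E} (x : W ⟶ p.cod) (y : W ⟶ q.dom)
    (h : x ≫ φ.base = y ≫ q.map) : φ.liftAt x y h ≫ p.map = x := by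
  rw [liftAt, Category.assoc, φ.w, pullback.lift_fst]

theorem lift_eq_liftAt (φ : PolyHom p q) :
    φ.lift = φ.liftAt (pullback.fst _ _) (pullback.snd _ _) pullback.condition := by
  rw [liftAt, pullback.lift_fst_snd, Category.id_comp]

theorem congrHom_hom_comp_lift (φ : PolyHom p q) {f : p.cod ⟶ q.cod} (e : f = φ.base) :
    (pullback.congrHom e rfl).hom ≫ φ.lift =
      φ.liftAt (pullback.fst f q.map) (pullback.snd f q.map) (e ▸ pullback.condition) := by
  subst e
  rw [liftAt, pullback.congrHom_hom]
  congr 1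
  ext <;> simp

theorem comp_liftAt (φ : PolyHom p q) (ψ : PolyHom q r) {W : E} (x : W ⟶ p.cod)
    (z : W ⟶ r.dom) (h : x ≫ (φ.comp ψ).base = z ≫ r.map) :
    (φ.comp ψ).liftAt x z h =
      φ.liftAt x (ψ.liftAt (x ≫ φ.base) z (by rw [Category.assoc]; exact h))
        (by rw [liftAt_map]) := by
  simp only [liftAt, comp, ← Category.assoc]
  congr 1
  -- The `HasPullback` instances for `(φ.comp ψ).base` and `φ.base ≫ ψ.base` agree only after
  -- unfolding `comp`, so the last step of each branch is an `exact` rather than a rewrite.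
  apply pullback.hom_ext
  · rw [Category.assoc, pullback.lift_fst, pullback.lift_fst]
    exact pullback.lift_fst _ _ _
  · rw [Category.assoc, pullback.lift_snd, pullback.lift_snd, ← Category.assoc]
    congr 1
    apply pullback.hom_ext
    · rw [Category.assoc, pullback.lift_fst]
      exact (pullback.lift_fst_assoc _ _ _ _).trans (pullback.lift_fst _ _ _).symm
    · rw [Category.assoc, pullback.lift_snd, pullback.lift_snd, Category.comp_id]
      exact pullback.lift_snd _ _ _

theorem id_liftAt {W : E} (x : W ⟶ p.cod) (y : W ⟶ p.dom)
    (h : x ≫ (PolyHom.id p).base = y ≫ p.map) :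
    (PolyHom.id p).liftAt x y h = y :=
  pullback.lift_snd _ _ _

theorem comp_assoc_liftAt (φ : PolyHom p q) (ψ : PolyHom q r) (χ : PolyHom r s) {W : E}
    (x : W ⟶ p.cod) (w : W ⟶ s.dom) (h : x ≫ ((φ.comp ψ).comp χ).base = w ≫ s.map) :
    ((φ.comp ψ).comp χ).liftAt x w h =
      (φ.comp (ψ.comp χ)).liftAt x w
        (by rw [comp_base, comp_base, ← Category.assoc φ.base]; exact h) := by
  rw [comp_liftAt, comp_liftAt, comp_liftAt]
  congr 1
  rw [comp_liftAt]
  congr 2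
  exact (Category.assoc _ _ _).symm

theorem id_comp_liftAt (φ : PolyHom p q) {W : E} (x : W ⟶ p.cod) (y : W ⟶ q.dom)
    (h : x ≫ ((PolyHom.id p).comp φ).base = y ≫ q.map) :
    ((PolyHom.id p).comp φ).liftAt x y h =
      φ.liftAt x y (by rw [← Category.id_comp φ.base]; exact h) := by
  rw [comp_liftAt, id_liftAt]
  congr 1
  exact Category.comp_id x

theorem comp_id_liftAt (φ : PolyHom p q) {W : E} (x : W ⟶ p.cod) (y : W ⟶ q.dom)
    (h : x ≫ (φ.comp (PolyHom.id q)).base = y ≫ q.map) :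
    (φ.comp (PolyHom.id q)).liftAt x y h =
      φ.liftAt x y (by rw [← Category.comp_id φ.base]; exact h) := by
  rw [comp_liftAt]
  congr 1
  exact id_liftAt _ _ _

end PolyHom

/-- Polynomials and morphisms of polynomials form a category: the composition above is
associative and unital (up to the canonical identifications of pullbacks along equal
morphisms). -/
theorem polyHom_assoc_and_unital {p q r s : PolyObj E}
    (φ : PolyHom p q) (ψ : PolyHom q r) (χ : PolyHom r s) :
    ((φ.comp ψ).comp χ).base = (φ.comp (ψ.comp χ)).base ∧
    ((φ.comp ψ).comp χ).lift =
      (pullback.congrHom (Category.assoc φ.base ψ.base χ.base) rfl).hom ≫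
        (φ.comp (ψ.comp χ)).lift ∧
    ((PolyHom.id p).comp φ).base = φ.base ∧
    ((PolyHom.id p).comp φ).lift =
      (pullback.congrHom (Category.id_comp φ.base) rfl).hom ≫ φ.lift ∧
    (φ.comp (PolyHom.id q)).base = φ.base ∧
    (φ.comp (PolyHom.id q)).lift =
      (pullback.congrHom (Category.comp_id φ.base) rfl).hom ≫ φ.lift := by
  refine ⟨Category.assoc .., ?_, Category.id_comp _, ?_, Category.comp_id _, ?_⟩
  · exact (PolyHom.lift_eq_liftAt _).trans
      ((PolyHom.comp_assoc_liftAt φ ψ χ _ _ _).trans (PolyHom.congrHom_hom_comp_lift _ _).symm)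
  · exact (PolyHom.lift_eq_liftAt _).trans
      ((PolyHom.id_comp_liftAt φ _ _ _).trans (PolyHom.congrHom_hom_comp_lift _ _).symm)
  · exact (PolyHom.lift_eq_liftAt _).trans
      ((PolyHom.comp_id_liftAt φ _ _ _).trans (PolyHom.congrHom_hom_comp_lift _ _).symm)
end

section
/- For any polynomial p : P* → P in a category E with finite limits, the polynomial endofunctor P(p) = Σ_! ∘ Π_p ∘ Δ_! : E → E preserves connected limits. -/
/-
`P(p)` is a composite of three functors. `Δ_!` is right adjoint to the forgetful functor
`Σ_! : E/P* ⥤ E` (maps `Y.left ⟶ X` are maps `Y ⟶ X ⨯ P*` over `P*`), and `Π_p` is right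
adjoint to pullback, so both preserve all limits. The forgetful functor `E/P ⥤ E` preserves
connected limits: over a connected diagram, all legs of a cone induce the same map to `P`.
-/

open CategoryTheory Limits

universe w w' v u

/-- The functor `Δ_! : E ⥤ E/P*`, `X ↦ (X ⨯ P* → P*)`. -/
@[simps]
noncomputable def deltaBangC {E : Type u} [Category.{v} E] [HasFiniteLimits E] (Pstar : E) :
    E ⥤ Over Pstar where
  obj X := Over.mk (prod.snd : X ⨯ Pstar ⟶ Pstar)
  map f := Over.homMk (prod.map f (𝟙 _))

section

variable {E : Type u} [Category.{v} E] [HasFiniteLimits E] (Pstar : E)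

noncomputable def forgetAdjDeltaBangC : Over.forget Pstar ⊣ deltaBangC Pstar :=
  Adjunction.mkOfHomEquiv
    { homEquiv Y X :=
        { toFun f := Over.homMk (prod.lift f Y.hom) (prod.lift_snd _ _)
          invFun g := g.left ≫ prod.fst
          left_inv f := prod.lift_fst _ _
          right_inv g := by
            ext
            apply prod.hom_ext
            · exact prod.lift_fst _ _
            · exact (prod.lift_snd _ _).trans (Over.w g).symm }
      homEquiv_naturality_left_symm _ _ := Category.assoc _ _ _
      homEquiv_naturality_right {Y _ X} f g := by
        ext
        have h := prod.lift_map (V := Y.left) f Y.hom g (𝟙 Pstar)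
        rw [Category.comp_id] at h
        exact h.symm }

instance : (deltaBangC Pstar).IsRightAdjoint := (forgetAdjDeltaBangC Pstar).isRightAdjoint

end

/-- For any polynomial `p : P* ⟶ P` in a category `E` with finite limits (with `Π_p` a right
adjoint to pullback along `p`), the polynomial endofunctor
`P(p) = Σ_! ∘ Π_p ∘ Δ_! : E ⥤ E` preserves connected limits. -/
theorem polyEndofunctor_preserves_connected_limits
    {E : Type u} [Category.{v} E] [HasFiniteLimits E] {Pstar P : E} (p : Pstar ⟶ P)
    (Pi : Over Pstar ⥤ Over P) (adj : Over.pullback p ⊣ Pi)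
    (J : Type w) [Category.{w'} J] [IsConnected J] :
    Nonempty (PreservesLimitsOfShape J (deltaBangC Pstar ⋙ Pi ⋙ Over.forget P)) := by
  have : Pi.IsRightAdjoint := adj.isRightAdjoint
  exact ⟨inferInstance⟩
end

section
/- In the category of sets, for polynomials p, q, r, s there is a natural transformation (duoidal interchange) (p ◁ q) ⊗ (r ◁ s) → (p ⊗ r) ◁ (q ⊗ s) of polynomial functors, given on positions by sending (I ∈ P, J : p[I] → Q, K ∈ R, L : r[K] → S) to (I, K, J × L : p[I] × r[K] → Q × S), and which is cartesian (an isomorphism on each fiber of directions). -/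
open CategoryTheory

universe u

/-- A polynomial in `Set`: a set of positions with a set of directions at each position. -/
structure SPoly : Type (u + 1) where
  pos : Type u
  dir : pos → Type u

/-- A morphism of set polynomials: forwards on positions, backwards on directions. -/
@[ext]
structure SPolyHom (p q : SPoly.{u}) : Type u where
  onPos : p.pos → q.pos
  onDir : (I : p.pos) → q.dir (onPos I) → p.dir I

/-- The category of set polynomials. -/
instance : Category SPoly.{u} where
  Hom := SPolyHom
  id _ := ⟨id, fun _ => id⟩
  comp f g := ⟨g.onPos ∘ f.onPos, fun I d => f.onDir I (g.onDir (f.onPos I) d)⟩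
  id_comp _ := rfl
  comp_id _ := rfl
  assoc _ _ _ := rfl

/-- The Dirichlet tensor product of set polynomials. -/
def SPoly.tensor (p q : SPoly.{u}) : SPoly.{u} :=
  ⟨p.pos × q.pos, fun x => p.dir x.1 × q.dir x.2⟩

/-- The composition product `p ◁ q` of set polynomials. -/
def SPoly.tri (p q : SPoly.{u}) : SPoly.{u} :=
  ⟨(I : p.pos) × (p.dir I → q.pos), fun x => (i : p.dir x.1) × q.dir (x.2 i)⟩

/-- The tensor product of morphisms of set polynomials. -/
def tensorHom {p p' q q' : SPoly.{u}} (f : p ⟶ p') (g : q ⟶ q') :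
    p.tensor q ⟶ p'.tensor q' where
  onPos x := (f.onPos x.1, g.onPos x.2)
  onDir x d := (f.onDir x.1 d.1, g.onDir x.2 d.2)

/-- The composition product of morphisms of set polynomials. -/
def triHom {p p' q q' : SPoly.{u}} (f : p ⟶ p') (g : q ⟶ q') :
    p.tri q ⟶ p'.tri q' where
  onPos x := ⟨f.onPos x.1, fun d' => g.onPos (x.2 (f.onDir x.1 d'))⟩
  onDir x d := ⟨f.onDir x.1 d.1, g.onDir _ d.2⟩

def duoFwd (p q r s : SPoly.{u}) :
    (p.tri q).tensor (r.tri s) ⟶ (p.tensor r).tri (q.tensor s) where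
  onPos x := ⟨(x.1.1, x.2.1), fun d => (x.1.2 d.1, x.2.2 d.2)⟩
  onDir x d := (⟨d.1.1, d.2.1⟩, ⟨d.1.2, d.2.2⟩)

/-- Duoidal interchange in `Set`: there is a morphism
`(p ◁ q) ⊗ (r ◁ s) ⟶ (p ⊗ r) ◁ (q ⊗ s)` sending the position `(I, J, K, L)` to
`(I, K, J × L)`, and it is cartesian: an isomorphism on each fiber of directions. -/
theorem duoidal_interchange (p q r s : SPoly.{u}) :
    ∃ φ : (p.tri q).tensor (r.tri s) ⟶ (p.tensor r).tri (q.tensor s),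
      φ.onPos = (fun x => ⟨(x.1.1, x.2.1), fun d => (x.1.2 d.1, x.2.2 d.2)⟩) ∧
      ∀ x, Function.Bijective (φ.onDir x) := by
  refine ⟨duoFwd p q r s, rfl, fun x => ?_⟩
  refine Function.bijective_iff_has_inverse.mpr
    ⟨fun y => ⟨(y.1.1, y.2.1), (y.1.2, y.2.2)⟩, ?_, ?_⟩
  · rintro ⟨⟨i,k⟩,⟨dq,ds⟩⟩; rfl
  · rintro ⟨⟨i,dq⟩, ⟨k,ds⟩⟩; rfl
end

section
/- In the category of sets, for polynomials p and q, the polynomial [p, q] with position set Hom_{Poly}(p, q) and direction set Σ_{I ∈ P} q[φ₁ I] at position φ = (φ₁, φ♯) is an internal hom for the Dirichlet tensor product: Hom_{Poly}(p ⊗ r, q) ≅ Hom_{Poly}(r, [p, q]) naturally in r. -/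
open CategoryTheory

universe u

/-- The internal hom polynomial `[p, q]`: positions are morphisms `p ⟶ q`, and directions at
`φ` are pairs of a position `I` of `p` and a direction of `q` at `φ₁ I`. -/
def SPoly.ihom (p q : SPoly.{u}) : SPoly.{u} :=
  ⟨p ⟶ q, fun φ => (I : p.pos) × q.dir (φ.onPos I)⟩

/-- `[p, q]` is an internal hom for the Dirichlet tensor product:
`Hom(p ⊗ r, q) ≅ Hom(r, [p, q])` naturally in `r`. -/
theorem ihom_closure (p q : SPoly.{u}) :
    ∃ e : ∀ r : SPoly.{u}, (p.tensor r ⟶ q) ≃ (r ⟶ p.ihom q),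
      ∀ {r r' : SPoly.{u}} (h : r ⟶ r') (g : p.tensor r' ⟶ q),
        e r (tensorHom (𝟙 p) h ≫ g) = h ≫ e r' g := by
  refine ⟨fun r => ⟨fun g => ⟨fun J => ⟨fun I => g.onPos (I, J),
      fun I d => (g.onDir (I, J) d).1⟩, fun J x => (g.onDir (x.1, J) x.2).2⟩,
    fun f => ⟨fun x => (f.onPos x.2).onPos x.1,
      fun x d => ((f.onPos x.2).onDir x.1 d, f.onDir x.2 ⟨x.1, d⟩)⟩,
    fun g => rfl, fun f => rfl⟩, fun h g => rfl⟩
end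

section
/- In the category of sets, for polynomials p, q, r, there is a natural bijection Hom_{Poly}(p, r ◁ q) ≅ Hom_{Poly}(⟨p\q⟩, r), where ⟨p\q⟩ is the polynomial with positions P and direction set Σ_{J ∈ Q} p[I]^{q[J]} at position I ∈ P (right coclosure of the composition product). -/
open CategoryTheory

universe u

/-- The right coclosure `⟨p\q⟩` of the composition product: positions are those of `p`, and
directions at `I` are pairs `(J, q[J] → p[I])`. -/
def SPoly.lens (p q : SPoly.{u}) : SPoly.{u} :=
  ⟨p.pos, fun I => (J : q.pos) × (q.dir J → p.dir I)⟩

/-- `⟨p\q⟩` is a right coclosure for the composition product: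
`Hom(p, r ◁ q) ≅ Hom(⟨p\q⟩, r)` naturally in `r`. -/
theorem lens_right_coclosure (p q : SPoly.{u}) :
    ∃ e : ∀ r : SPoly.{u}, (p ⟶ r.tri q) ≃ (p.lens q ⟶ r),
      ∀ {r r' : SPoly.{u}} (h : r ⟶ r') (g : p ⟶ r.tri q),
        e r' (g ≫ triHom h (𝟙 q)) = e r g ≫ h := by
  refine ⟨fun r => ⟨fun g => ⟨fun I => (g.onPos I).1,
      fun I d => ⟨(g.onPos I).2 d, fun e => g.onDir I ⟨d, e⟩⟩⟩,
    fun f => ⟨fun I => ⟨f.onPos I, fun d => (f.onDir I d).1⟩,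
      fun I d => (f.onDir I d.1).2 d.2⟩, ?_, ?_⟩, ?_⟩
  · intro g; rfl
  · intro f; rfl
  · intro r r' h g; rfl
end

section
/- In the category of sets, for polynomials p, q, r there is a natural bijection Hom_{Poly}(p, q ◁ r) ≅ Σ_{f : P → Q} Hom_{Poly}(p ⌢_f q, r), where p ⌢_f q is the polynomial with positions Σ_{I ∈ P} q[f(I)] and directions p[I] at position (I, j) (indexed left coclosure). -/
open CategoryTheory

universe u

/-- The indexed left coclosure `p ⌢_f q` for a function `f` on positions: positions are pairs
`(I, j ∈ q[f I])`, and directions at `(I, j)` are `p[I]`. -/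
def SPoly.frown (p q : SPoly.{u}) (f : p.pos → q.pos) : SPoly.{u} :=
  ⟨(I : p.pos) × q.dir (f I), fun x => p.dir x.1⟩

/-- The indexed left coclosure property of `⌢`:
`Hom(p, q ◁ r) ≅ Σ_{f : P → Q} Hom(p ⌢_f q, r)`. -/
theorem frown_indexed_left_coclosure (p q r : SPoly.{u}) :
    Nonempty ((p ⟶ q.tri r) ≃ Σ f : p.pos → q.pos, (p.frown q f ⟶ r)) := by
  refine ⟨⟨fun φ => ⟨fun I => (φ.onPos I).1,
    { onPos := fun x => (φ.onPos x.1).2 x.2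
      onDir := fun x d => φ.onDir x.1 ⟨x.2, d⟩ }⟩,
    fun ⟨f, ψ⟩ =>
    { onPos := fun I => ⟨f I, fun j => ψ.onPos ⟨I, j⟩⟩
      onDir := fun I d => ψ.onDir ⟨I, d.1⟩ d.2 },
    fun φ => rfl, fun ⟨f, ψ⟩ => rfl⟩⟩
end

section
/- In the category of set polynomials, for any polynomial q, the functor q ◁ − : Poly → Poly preserves connected limits. -/
open CategoryTheory

universe u

universe w w'

open Limits

/-- The functor `q ◁ − : Poly ⥤ Poly`. -/
def SPoly.triLeft (q : SPoly.{u}) : SPoly.{u} ⥤ SPoly.{u} where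
  obj r := q.tri r
  map h := triHom (𝟙 q) h
  map_id _ := rfl
  map_comp _ _ := rfl

/- ## Auxiliary lemmas -/

section Aux

theorem sigma_fun_eq {α γ : Type u} {β : α → Type u}
    (x y : (a : α) × (β a → γ)) (h1 : x.1 = y.1)
    (h2 : ∀ (d : β x.1) (d' : β y.1), HEq d d' → x.2 d = y.2 d') : x = y := by
  obtain ⟨a, f⟩ := x
  obtain ⟨b, g⟩ := y
  dsimp at h1
  subst h1
  have : f = g := funext fun d => h2 d d HEq.rfl
  rw [this]

/-- Extensionality for morphisms of set polynomials, heterogeneous on directions. -/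
theorem SPolyHom.ext' {p r : SPoly.{u}} (f g : p ⟶ r)
    (h1 : ∀ x, f.onPos x = g.onPos x)
    (h2 : ∀ x (d : r.dir (f.onPos x)) (d' : r.dir (g.onPos x)),
      HEq d d' → f.onDir x d = g.onDir x d') : f = g := by
  obtain ⟨fp, fd⟩ := f
  obtain ⟨gp, gd⟩ := g
  have hpos : fp = gp := funext h1
  subst hpos
  have hdir : fd = gd := funext fun x => funext fun d => h2 x d d HEq.rfl
  rw [hdir]

/-- Extensionality for morphisms into a composition product `q ◁ r`. -/
theorem SPolyHom.ext_tri {p r : SPoly.{u}} (q : SPoly.{u}) (f g : p ⟶ q.tri r)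
    (hI : ∀ x, (f.onPos x).1 = (g.onPos x).1)
    (hP : ∀ x (d : q.dir (f.onPos x).1) (d' : q.dir (g.onPos x).1),
      HEq d d' → (f.onPos x).2 d = (g.onPos x).2 d')
    (hD : ∀ x (d : q.dir (f.onPos x).1) (d' : q.dir (g.onPos x).1), HEq d d' →
      ∀ (e : r.dir ((f.onPos x).2 d)) (e' : r.dir ((g.onPos x).2 d')), HEq e e' →
      f.onDir x ⟨d, e⟩ = g.onDir x ⟨d', e'⟩) : f = g := by
  obtain ⟨fp, fd⟩ := f
  obtain ⟨gp, gd⟩ := g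
  have hpos : fp = gp := funext fun x => sigma_fun_eq _ _ (hI x) (hP x)
  subst hpos
  have hdir : fd = gd := by
    funext x dd
    obtain ⟨d, e⟩ := dd
    exact hD x d d HEq.rfl e e HEq.rfl
  rw [hdir]

/-- Dependent congruence for `onDir` along an equality of morphisms. -/
theorem onDir_congr' {p r : SPoly.{u}} {f g : p ⟶ r} (w : f = g) (x : p.pos)
    (e : r.dir (f.onPos x)) (e' : r.dir (g.onPos x)) (he : HEq e e') :
    f.onDir x e = g.onDir x e' := by
  subst w
  rw [eq_of_heq he]

/-- The positions part of the equation `f ≫ (q ◁ g) = h`. -/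
theorem tri_comp_pos' {q p a b : SPoly.{u}} (f : p ⟶ q.tri a) (g : a ⟶ b) (h : p ⟶ q.tri b)
    (w : f ≫ triHom (𝟙 q) g = h) (x : p.pos)
    (d : q.dir (f.onPos x).1) (d' : q.dir (h.onPos x).1) (hd : HEq d d') :
    g.onPos ((f.onPos x).2 d) = (h.onPos x).2 d' := by
  subst w
  rw [eq_of_heq hd]; rfl

/-- The directions part of the equation `f ≫ (q ◁ g) = h`. -/
theorem tri_comp_dir' {q p a b : SPoly.{u}} (f : p ⟶ q.tri a) (g : a ⟶ b) (h : p ⟶ q.tri b)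
    (w : f ≫ triHom (𝟙 q) g = h) (x : p.pos)
    (d : q.dir (f.onPos x).1) (d' : q.dir (h.onPos x).1) (hd : HEq d d')
    (r : b.dir (g.onPos ((f.onPos x).2 d))) (r' : b.dir ((h.onPos x).2 d')) (hr : HEq r r') :
    f.onDir x ⟨d, g.onDir _ r⟩ = h.onDir x ⟨d', r'⟩ := by
  subst w
  have hd' : d = d' := eq_of_heq hd
  subst hd'
  rw [eq_of_heq hr]; rfl

end Aux

/- ## The main construction -/

section Main

variable {q : SPoly.{u}} {J : Type w} [Category.{w'} J] [IsConnected J]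
  {K : J ⥤ SPoly.{u}}

/-- The `q`-position at cone position `x` induced by the `j`-th cone leg. -/
def posFst (s : Cone (K ⋙ SPoly.triLeft q)) (x : s.pt.pos) (j : J) : q.pos :=
  ((s.π.app j).onPos x).1

/-- By connectedness of `J`, the induced `q`-position is independent of the leg. -/
theorem posFst_const (s : Cone (K ⋙ SPoly.triLeft q)) (x : s.pt.pos) (j j' : J) :
    posFst s x j = posFst s x j' :=
  constant_of_preserves_morphisms (posFst s x)
    (fun a b f => by
      show ((s.π.app a).onPos x).1 = ((s.π.app b).onPos x).1
      rw [← s.w f]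
      rfl) j j'

/-- The canonical `q`-position at cone position `x`. -/
noncomputable def posI (s : Cone (K ⋙ SPoly.triLeft q)) (x : s.pt.pos) : q.pos :=
  posFst s x (Classical.arbitrary J)

/-- Transport of directions from the canonical `q`-position to the `j`-th one. -/
noncomputable def castD (s : Cone (K ⋙ SPoly.triLeft q)) (x : s.pt.pos) (j : J)
    (d : q.dir (posI s x)) : q.dir (posFst s x j) :=
  cast (congrArg q.dir (posFst_const s x (Classical.arbitrary J) j)) d

/-- The cone over `K` induced by a cone position `x` and a `q`-direction `d`. -/
noncomputable def coneAt (s : Cone (K ⋙ SPoly.triLeft q)) (x : s.pt.pos)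
    (d : q.dir (posI s x)) : Cone K where
  pt := ⟨PUnit, fun _ => s.pt.dir x⟩
  π :=
    { app := fun j =>
        { onPos := fun _ => ((s.π.app j).onPos x).2 (castD s x j d)
          onDir := fun _ r => (s.π.app j).onDir x ⟨castD s x j d, r⟩ }
      naturality := fun a b f => by
        have hd : HEq (castD s x a d) (castD s x b d) :=
          (cast_heq _ _).trans (cast_heq _ _).symm
        apply SPolyHom.ext'
        · intro y
          exact (tri_comp_pos' (s.π.app a) (K.map f) (s.π.app b) (s.w f) x
            (castD s x a d) (castD s x b d) hd).symm
        · intro y e e' he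
          exact (tri_comp_dir' (s.π.app a) (K.map f) (s.π.app b) (s.w f) x
            (castD s x a d) (castD s x b d) hd e' e he.symm).symm }

variable (c : Cone K) (hc : IsLimit c)

/-- The lift of a cone over `K ⋙ (q ◁ −)` through `q ◁ lim K`. -/
noncomputable def theLift (s : Cone (K ⋙ SPoly.triLeft q)) :
    s.pt ⟶ SPoly.tri q c.pt where
  onPos x := ⟨posI s x, fun d => (hc.lift (coneAt s x d)).onPos PUnit.unit⟩
  onDir x dd := (hc.lift (coneAt s x dd.1)).onDir PUnit.unit dd.2

/-- The mapped cone is a limit cone. -/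
noncomputable def theIsLimit : IsLimit (q.triLeft.mapCone c) where
  lift s := theLift c hc s
  fac s j := by
    apply SPolyHom.ext_tri q
    case hI => intro x; exact posFst_const s x (Classical.arbitrary J) j
    case hP =>
      intro x d d' hd
      have h1 : castD s x j d = d' := eq_of_heq ((cast_heq _ _).trans hd)
      subst h1
      exact congrFun (congrArg SPolyHom.onPos (hc.fac (coneAt s x d) j)) PUnit.unit
    case hD =>
      intro x d d' hd e e' he
      have h1 : castD s x j d = d' := eq_of_heq ((cast_heq _ _).trans hd)
      subst h1
      exact onDir_congr' (hc.fac (coneAt s x d) j) PUnit.unit e e' he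
  uniq s m hm := by
    apply SPolyHom.ext_tri q
    case hI =>
      intro x
      have h := congrFun (congrArg SPolyHom.onPos (hm (Classical.arbitrary J))) x
      have h2 : (m.onPos x).1 = ((s.π.app (Classical.arbitrary J)).onPos x).1 :=
        congrArg Sigma.fst h
      exact h2
    case hP =>
      intro x d d' hd
      have huniq : (⟨fun _ => (m.onPos x).2 d, fun _ r => m.onDir x ⟨d, r⟩⟩ :
          (coneAt s x d').pt ⟶ c.pt) = hc.lift (coneAt s x d') := by
        refine hc.uniq (coneAt s x d') _ fun j => ?_
        have hd2 : HEq d (castD s x j d') := hd.trans (cast_heq _ _).symm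
        apply SPolyHom.ext'
        · intro y
          exact tri_comp_pos' m (c.π.app j) (s.π.app j) (hm j) x d
            (castD s x j d') hd2
        · intro y e e' he
          exact tri_comp_dir' m (c.π.app j) (s.π.app j) (hm j) x d
            (castD s x j d') hd2 e e' he
      exact congrFun (congrArg SPolyHom.onPos huniq) PUnit.unit
    case hD =>
      intro x d d' hd e e' he
      have huniq : (⟨fun _ => (m.onPos x).2 d, fun _ r => m.onDir x ⟨d, r⟩⟩ :
          (coneAt s x d').pt ⟶ c.pt) = hc.lift (coneAt s x d') := by
        refine hc.uniq (coneAt s x d') _ fun j => ?_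
        have hd2 : HEq d (castD s x j d') := hd.trans (cast_heq _ _).symm
        apply SPolyHom.ext'
        · intro y
          exact tri_comp_pos' m (c.π.app j) (s.π.app j) (hm j) x d
            (castD s x j d') hd2
        · intro y e e' he
          exact tri_comp_dir' m (c.π.app j) (s.π.app j) (hm j) x d
            (castD s x j d') hd2 e e' he
      exact onDir_congr' huniq PUnit.unit e e' he

end Main

/-- For any set polynomial `q`, the functor `q ◁ −` preserves connected limits. -/
theorem triLeft_preserves_connected_limits (q : SPoly.{u})
    (J : Type w) [Category.{w'} J] [IsConnected J] :
    Nonempty (PreservesLimitsOfShape J q.triLeft) :=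
  ⟨⟨fun {K} => ⟨fun {c} hc => ⟨theIsLimit c hc⟩⟩⟩⟩
end

section
/- Comonoid structures on a polynomial c : C* → C in Set with respect to the composition product ◁ (comultiplication δ : c → c ◁ c, counit ε : c → y, satisfying coassociativity and counitality) are in bijection with small category structures whose object set is C, whose morphism set is C*, and whose source map is c. -/
open CategoryTheory

universe u

/-- The identity polynomial `y`. -/
def SPoly.y : SPoly.{u} := ⟨PUnit, fun _ => PUnit⟩

/-- The left unitor `y ◁ c ⟶ c`. -/
def luHom (c : SPoly.{u}) : SPoly.y.tri c ⟶ c where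
  onPos x := x.2 PUnit.unit
  onDir _ d := ⟨PUnit.unit, d⟩

/-- The right unitor `c ◁ y ⟶ c`. -/
def ruHom (c : SPoly.{u}) : c.tri SPoly.y ⟶ c where
  onPos x := x.1
  onDir _ d := ⟨d, PUnit.unit⟩

/-- The associator `(p ◁ q) ◁ r ⟶ p ◁ (q ◁ r)`. -/
def assocHom (p q r : SPoly.{u}) : (p.tri q).tri r ⟶ p.tri (q.tri r) where
  onPos x := ⟨x.1.1, fun i => ⟨x.1.2 i, fun d => x.2 ⟨i, d⟩⟩⟩
  onDir _ d := ⟨⟨d.1, d.2.1⟩, d.2.2⟩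

/-- A `◁`-comonoid structure on a set polynomial `c`: a counit `ε : c ⟶ y` and a
comultiplication `δ : c ⟶ c ◁ c` satisfying counitality and coassociativity. -/
structure ComonoidStr (c : SPoly.{u}) : Type u where
  counit : c ⟶ SPoly.y
  comul : c ⟶ c.tri c
  counit_left : comul ≫ triHom counit (𝟙 c) ≫ luHom c = 𝟙 c
  counit_right : comul ≫ triHom (𝟙 c) counit ≫ ruHom c = 𝟙 c
  coassoc : comul ≫ triHom comul (𝟙 c) ≫ assocHom c c c = comul ≫ triHom (𝟙 c) comul

/-- A small category structure with object set `C`, morphism set `C*`, and source map `c`. -/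
structure CatStr {Cstar C : Type u} (c : Cstar → C) : Type u where
  t : Cstar → C
  i : C → Cstar
  k : (g h : Cstar) → c h = t g → Cstar
  src_i : ∀ x, c (i x) = x
  tgt_i : ∀ x, t (i x) = x
  src_k : ∀ g h w, c (k g h w) = c g
  tgt_k : ∀ g h w, t (k g h w) = t h
  id_left : ∀ g, k (i (c g)) g (tgt_i (c g)).symm = g
  id_right : ∀ g, k g (i (t g)) (src_i (t g)) = g
  assoc : ∀ g h l (w₁ : c h = t g) (w₂ : c l = t h),
    k (k g h w₁) l (w₂.trans (tgt_k g h w₁).symm) =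
      k g (k h l w₂) ((src_k h l w₂).trans w₁)

namespace CE

variable {Cstar C : Type u} (c : Cstar → C)

/-- The polynomial with positions `C` and directions the fibers of `c`. -/
def P : SPoly.{u} := ⟨C, fun I => {x : Cstar // c x = I}⟩

/- ### Extensionality lemmas -/

lemma sig_ext {β : Type u} (X Y : Σ I : C, ({x : Cstar // c x = I} → β))
    (h1 : X.1 = Y.1) (h2 : ∀ x hx hx', X.2 ⟨x, hx⟩ = Y.2 ⟨x, hx'⟩) : X = Y := by
  obtain ⟨a, F⟩ := X
  obtain ⟨b, G⟩ := Y
  dsimp at h1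
  subst h1
  have : F = G := by
    funext d
    obtain ⟨x, hx⟩ := d
    exact h2 x hx hx
  rw [this]

lemma homy_ext {f g : P c ⟶ SPoly.y}
    (h : ∀ I, (f.onDir I PUnit.unit).val = (g.onDir I PUnit.unit).val) : f = g := by
  obtain ⟨fp, fd⟩ := f
  obtain ⟨gp, gd⟩ := g
  have hp : fp = gp := funext fun I => rfl
  subst hp
  have hd : fd = gd := by
    funext I d
    exact Subtype.ext (h I)
  rw [hd]

lemma hom1_ext {f g : P c ⟶ P c} (h1 : ∀ I, f.onPos I = g.onPos I)
    (h2 : ∀ I x hx hx', (f.onDir I ⟨x, hx⟩).val = (g.onDir I ⟨x, hx'⟩).val) : f = g := by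
  obtain ⟨fp, fd⟩ := f
  obtain ⟨gp, gd⟩ := g
  have hp : fp = gp := funext h1
  subst hp
  have hd : fd = gd := by
    funext I d
    obtain ⟨x, hx⟩ := d
    exact Subtype.ext (h2 I x hx hx)
  rw [hd]

lemma hom2_ext {f g : P c ⟶ (P c).tri (P c)}
    (h1 : ∀ I, (f.onPos I).1 = (g.onPos I).1)
    (h2 : ∀ I x hx hx', (f.onPos I).2 ⟨x, hx⟩ = (g.onPos I).2 ⟨x, hx'⟩)
    (h3 : ∀ I x hx hx' y hy hy',
      (f.onDir I ⟨⟨x, hx⟩, ⟨y, hy⟩⟩).val = (g.onDir I ⟨⟨x, hx'⟩, ⟨y, hy'⟩⟩).val) :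
    f = g := by
  obtain ⟨fp, fd⟩ := f
  obtain ⟨gp, gd⟩ := g
  have hp : fp = gp := funext fun I => sig_ext c _ _ (h1 I) (h2 I)
  subst hp
  have hd : fd = gd := by
    funext I d
    obtain ⟨⟨x, hx⟩, ⟨y, hy⟩⟩ := d
    exact Subtype.ext (h3 I x hx hx y hy hy)
  rw [hd]

lemma hom3_ext {f g : P c ⟶ (P c).tri ((P c).tri (P c))}
    (h1 : ∀ I, (f.onPos I).1 = (g.onPos I).1)
    (h2 : ∀ I x hx hx', ((f.onPos I).2 ⟨x, hx⟩).1 = ((g.onPos I).2 ⟨x, hx'⟩).1)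
    (h3 : ∀ I x hx hx' y hy hy',
      ((f.onPos I).2 ⟨x, hx⟩).2 ⟨y, hy⟩ = ((g.onPos I).2 ⟨x, hx'⟩).2 ⟨y, hy'⟩)
    (h4 : ∀ I x hx hx' y hy hy' z hz hz',
      (f.onDir I ⟨⟨x, hx⟩, ⟨y, hy⟩, ⟨z, hz⟩⟩).val
        = (g.onDir I ⟨⟨x, hx'⟩, ⟨y, hy'⟩, ⟨z, hz'⟩⟩).val) :
    f = g := by
  obtain ⟨fp, fd⟩ := f
  obtain ⟨gp, gd⟩ := g
  have hp : fp = gp := funext fun I =>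
    sig_ext c _ _ (h1 I) (fun x hx hx' => sig_ext c _ _ (h2 I x hx hx') (h3 I x hx hx'))
  subst hp
  have hd : fd = gd := by
    funext I d
    obtain ⟨⟨x, hx⟩, ⟨y, hy⟩, ⟨z, hz⟩⟩ := d
    exact Subtype.ext (h4 I x hx hx y hy hy z hz hz)
  rw [hd]

/- ### Extraction lemmas -/

lemma exd1 {f g : P c ⟶ P c} (e : f = g) (I : C) (x : Cstar)
    (hx : c x = f.onPos I) (hx' : c x = g.onPos I) :
    (f.onDir I ⟨x, hx⟩).val = (g.onDir I ⟨x, hx'⟩).val := by subst e; rfl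

lemma ex3_pos3 {f g : P c ⟶ (P c).tri ((P c).tri (P c))} (e : f = g) (I : C)
    (x : Cstar) (hx : c x = (f.onPos I).1) (hx' : c x = (g.onPos I).1)
    (y : Cstar) (hy : c y = ((f.onPos I).2 ⟨x, hx⟩).1)
    (hy' : c y = ((g.onPos I).2 ⟨x, hx'⟩).1) :
    ((f.onPos I).2 ⟨x, hx⟩).2 ⟨y, hy⟩ = ((g.onPos I).2 ⟨x, hx'⟩).2 ⟨y, hy'⟩ := by
  subst e; rfl

lemma ex3_dir {f g : P c ⟶ (P c).tri ((P c).tri (P c))} (e : f = g) (I : C)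
    (x : Cstar) (hx : c x = (f.onPos I).1) (hx' : c x = (g.onPos I).1)
    (y : Cstar) (hy : c y = ((f.onPos I).2 ⟨x, hx⟩).1)
    (hy' : c y = ((g.onPos I).2 ⟨x, hx'⟩).1)
    (z : Cstar) (hz : c z = ((f.onPos I).2 ⟨x, hx⟩).2 ⟨y, hy⟩)
    (hz' : c z = ((g.onPos I).2 ⟨x, hx'⟩).2 ⟨y, hy'⟩) :
    (f.onDir I ⟨⟨x, hx⟩, ⟨y, hy⟩, ⟨z, hz⟩⟩).val
      = (g.onDir I ⟨⟨x, hx'⟩, ⟨y, hy'⟩, ⟨z, hz'⟩⟩).val := by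
  subst e; rfl

/- ### From comonoids to categories -/

section Forward

variable (M : ComonoidStr (P c))

lemma pos1 (I : C) : (M.comul.onPos I).1 = I :=
  congrFun (congrArg SPolyHom.onPos M.counit_right) I

lemma lpos (I : C) :
    (M.comul.onPos I).2 (M.counit.onDir (M.comul.onPos I).1 PUnit.unit) = I :=
  congrFun (congrArg SPolyHom.onPos M.counit_left) I

/-- The target map. -/
def mt (g : Cstar) : C := (M.comul.onPos (c g)).2 ⟨g, (pos1 c M (c g)).symm⟩

/-- The identity map. -/
def mi (I : C) : Cstar := (M.counit.onDir I PUnit.unit).val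

/-- The composition map. -/
def mk' (g h : Cstar) (w : c h = mt c M g) : Cstar :=
  (M.comul.onDir (c g) ⟨⟨g, (pos1 c M (c g)).symm⟩, ⟨h, w⟩⟩).val

lemma t_eq (x : Cstar) {J : C} (hJ : J = c x) (hx : c x = (M.comul.onPos J).1) :
    (M.comul.onPos J).2 ⟨x, hx⟩ = mt c M x := by subst hJ; rfl

lemma t_congr {a a' : Cstar} (e : a = a') : mt c M a = mt c M a' := by subst e; rfl

lemma k_gen (a b : Cstar) {J : C} (hJ : J = c a) (ha : c a = (M.comul.onPos J).1)
    (hb : c b = (M.comul.onPos J).2 ⟨a, ha⟩) (w : c b = mt c M a) :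
    (M.comul.onDir J ⟨⟨a, ha⟩, ⟨b, hb⟩⟩).val = mk' c M a b w := by subst hJ; rfl

lemma k_congr {a a' b b' : Cstar} (e1 : a = a') (e2 : b = b')
    (w : c b = mt c M a) (w' : c b' = mt c M a') : mk' c M a b w = mk' c M a' b' w' := by
  subst e1; subst e2; rfl

lemma m_src_i (x : C) : c (mi c M x) = x := (M.counit.onDir x PUnit.unit).2

lemma m_tgt_i (I : C) : mt c M (mi c M I) = I := by
  have h0 := lpos c M I
  have h1 : (M.comul.onPos I).2 ⟨mi c M ((M.comul.onPos I).1), m_src_i c M _⟩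
      = mt c M (mi c M ((M.comul.onPos I).1)) :=
    t_eq c M _ ((m_src_i c M _).trans (pos1 c M I)).symm (m_src_i c M _)
  exact (t_congr c M (congrArg (mi c M) (pos1 c M I))).symm.trans (h1.symm.trans h0)

lemma m_src_k (g h : Cstar) (w : c h = mt c M g) : c (mk' c M g h w) = c g :=
  (M.comul.onDir (c g) ⟨⟨g, (pos1 c M (c g)).symm⟩, ⟨h, w⟩⟩).2

lemma m_tgt_k (g h : Cstar) (w : c h = mt c M g) :
    mt c M (mk' c M g h w) = mt c M h := by
  have hx : c g = (M.comul.onPos ((M.comul.onPos (c g)).1)).1 :=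
    ((pos1 c M _).trans (pos1 c M (c g))).symm
  have hx' : c g = (M.comul.onPos (c g)).1 := (pos1 c M (c g)).symm
  have hy : c h = (M.comul.onPos ((M.comul.onPos (c g)).1)).2 ⟨g, hx⟩ :=
    w.trans (t_eq c M g (pos1 c M (c g)) hx).symm
  have hy' : c h = (M.comul.onPos (mt c M g)).1 := w.trans (pos1 c M (mt c M g)).symm
  have key := ex3_pos3 c M.coassoc (c g) g hx hx' h hy hy'
  have e1 : (M.comul.onDir ((M.comul.onPos (c g)).1) ⟨⟨g, hx⟩, ⟨h, hy⟩⟩).val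
      = mk' c M g h w := k_gen c M g h (pos1 c M (c g)) hx hy w
  have q2 := (M.comul.onDir ((M.comul.onPos (c g)).1) ⟨⟨g, hx⟩, ⟨h, hy⟩⟩).2
  have e2 : (M.comul.onPos (c g)).2
        (M.comul.onDir ((M.comul.onPos (c g)).1) ⟨⟨g, hx⟩, ⟨h, hy⟩⟩)
      = mt c M (M.comul.onDir ((M.comul.onPos (c g)).1) ⟨⟨g, hx⟩, ⟨h, hy⟩⟩).val :=
    t_eq c M _ (q2.trans (pos1 c M (c g))).symm q2
  have e3 : (M.comul.onPos (mt c M g)).2 ⟨h, hy'⟩ = mt c M h :=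
    t_eq c M h w.symm hy'
  exact (t_congr c M e1).symm.trans (e2.symm.trans (key.trans e3))

lemma m_id_left (g : Cstar) (w : c g = mt c M (mi c M (c g))) :
    mk' c M (mi c M (c g)) g w = g := by
  have hx : c g = (M.comul.onPos (c g)).2
      (M.counit.onDir ((M.comul.onPos (c g)).1) PUnit.unit) := (lpos c M (c g)).symm
  have w' : c g = mt c M (mi c M ((M.comul.onPos (c g)).1)) :=
    ((m_tgt_i c M _).trans (pos1 c M (c g))).symm
  have e0 := exd1 c M.counit_left (c g) g hx rfl
  have e1 : (M.comul.onDir (c g)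
        ⟨⟨mi c M ((M.comul.onPos (c g)).1), m_src_i c M _⟩, ⟨g, hx⟩⟩).val
      = mk' c M (mi c M ((M.comul.onPos (c g)).1)) g w' :=
    k_gen c M _ g ((m_src_i c M _).trans (pos1 c M (c g))).symm (m_src_i c M _) hx w'
  exact (k_congr c M (congrArg (mi c M) (pos1 c M (c g))) rfl w' w).symm.trans
    (e1.symm.trans e0)

lemma m_id_right (g : Cstar) (w : c (mi c M (mt c M g)) = mt c M g) :
    mk' c M g (mi c M (mt c M g)) w = g :=
  exd1 c M.counit_right (c g) g (pos1 c M (c g)).symm rfl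

lemma m_assoc (g h l : Cstar) (w₁ : c h = mt c M g) (w₂ : c l = mt c M h)
    (wa : c l = mt c M (mk' c M g h w₁)) (wb : c (mk' c M h l w₂) = mt c M g) :
    mk' c M (mk' c M g h w₁) l wa = mk' c M g (mk' c M h l w₂) wb := by
  have hx : c g = (M.comul.onPos ((M.comul.onPos (c g)).1)).1 :=
    ((pos1 c M _).trans (pos1 c M (c g))).symm
  have hx' : c g = (M.comul.onPos (c g)).1 := (pos1 c M (c g)).symm
  have hy : c h = (M.comul.onPos ((M.comul.onPos (c g)).1)).2 ⟨g, hx⟩ :=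
    w₁.trans (t_eq c M g (pos1 c M (c g)) hx).symm
  have hy' : c h = (M.comul.onPos (mt c M g)).1 := w₁.trans (pos1 c M (mt c M g)).symm
  have e1 : (M.comul.onDir ((M.comul.onPos (c g)).1) ⟨⟨g, hx⟩, ⟨h, hy⟩⟩).val
      = mk' c M g h w₁ := k_gen c M g h (pos1 c M (c g)) hx hy w₁
  have q2 := (M.comul.onDir ((M.comul.onPos (c g)).1) ⟨⟨g, hx⟩, ⟨h, hy⟩⟩).2
  have e2 : (M.comul.onPos (c g)).2
        (M.comul.onDir ((M.comul.onPos (c g)).1) ⟨⟨g, hx⟩, ⟨h, hy⟩⟩)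
      = mt c M (M.comul.onDir ((M.comul.onPos (c g)).1) ⟨⟨g, hx⟩, ⟨h, hy⟩⟩).val :=
    t_eq c M _ (q2.trans (pos1 c M (c g))).symm q2
  have hz : c l = (M.comul.onPos (c g)).2
      (M.comul.onDir ((M.comul.onPos (c g)).1) ⟨⟨g, hx⟩, ⟨h, hy⟩⟩) :=
    w₂.trans ((m_tgt_k c M g h w₁).symm.trans
      ((t_congr c M e1).symm.trans e2.symm))
  have e3 : (M.comul.onPos (mt c M g)).2 ⟨h, hy'⟩ = mt c M h := t_eq c M h w₁.symm hy'
  have hz' : c l = (M.comul.onPos (mt c M g)).2 ⟨h, hy'⟩ := w₂.trans e3.symm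
  have key := ex3_dir c M.coassoc (c g) g hx hx' h hy hy' l hz hz'
  -- identify the left-hand side
  have wl : c l = mt c M (M.comul.onDir ((M.comul.onPos (c g)).1)
      ⟨⟨g, hx⟩, ⟨h, hy⟩⟩).val := w₂.trans ((t_congr c M e1).trans (m_tgt_k c M g h w₁)).symm
  have eL : (M.comul.onDir (c g)
        ⟨M.comul.onDir ((M.comul.onPos (c g)).1) ⟨⟨g, hx⟩, ⟨h, hy⟩⟩, ⟨l, hz⟩⟩).val
      = mk' c M (M.comul.onDir ((M.comul.onPos (c g)).1) ⟨⟨g, hx⟩, ⟨h, hy⟩⟩).val l wl :=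
    k_gen c M _ l (q2.trans (pos1 c M (c g))).symm q2 hz wl
  -- identify the right-hand side
  have r2 := (M.comul.onDir (mt c M g) ⟨⟨h, hy'⟩, ⟨l, hz'⟩⟩).2
  have eR1 : (M.comul.onDir (mt c M g) ⟨⟨h, hy'⟩, ⟨l, hz'⟩⟩).val = mk' c M h l w₂ :=
    k_gen c M h l w₁.symm hy' hz' w₂
  have eR : (M.comul.onDir (c g)
        ⟨⟨g, hx'⟩, M.comul.onDir (mt c M g) ⟨⟨h, hy'⟩, ⟨l, hz'⟩⟩⟩).val
      = mk' c M g (M.comul.onDir (mt c M g) ⟨⟨h, hy'⟩, ⟨l, hz'⟩⟩).val r2 :=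
    k_gen c M g _ rfl hx' r2 r2
  calc mk' c M (mk' c M g h w₁) l wa
      = mk' c M (M.comul.onDir ((M.comul.onPos (c g)).1) ⟨⟨g, hx⟩, ⟨h, hy⟩⟩).val l wl :=
        k_congr c M e1.symm rfl wa wl
    _ = (M.comul.onDir (c g)
          ⟨M.comul.onDir ((M.comul.onPos (c g)).1) ⟨⟨g, hx⟩, ⟨h, hy⟩⟩, ⟨l, hz⟩⟩).val :=
        eL.symm
    _ = (M.comul.onDir (c g)
          ⟨⟨g, hx'⟩, M.comul.onDir (mt c M g) ⟨⟨h, hy'⟩, ⟨l, hz'⟩⟩⟩).val := key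
    _ = mk' c M g (M.comul.onDir (mt c M g) ⟨⟨h, hy'⟩, ⟨l, hz'⟩⟩).val r2 := eR
    _ = mk' c M g (mk' c M h l w₂) wb := k_congr c M rfl eR1 r2 wb

/-- From a comonoid structure to a category structure. -/
def toCat : CatStr c where
  t := mt c M
  i := mi c M
  k := mk' c M
  src_i := m_src_i c M
  tgt_i := m_tgt_i c M
  src_k := m_src_k c M
  tgt_k := m_tgt_k c M
  id_left g := m_id_left c M g _
  id_right g := m_id_right c M g _
  assoc g h l w₁ w₂ := m_assoc c M g h l w₁ w₂ _ _

end Forward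

/- ### From categories to comonoids -/

section Backward

variable (S : CatStr c)

lemma Sk_congr {a a' b b' : Cstar} (e1 : a = a') (e2 : b = b')
    (w : c b = S.t a) (w' : c b' = S.t a') : S.k a b w = S.k a' b' w' := by
  subst e1; subst e2; rfl

/-- From a category structure to a comonoid structure. -/
def toCom : ComonoidStr (P c) where
  counit := ⟨fun _ => PUnit.unit, fun I _ => ⟨S.i I, S.src_i I⟩⟩
  comul := ⟨fun I => ⟨I, fun d => S.t d.val⟩,
    fun I d => ⟨S.k d.1.val d.2.val d.2.2, (S.src_k _ _ _).trans d.1.2⟩⟩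
  counit_left := by
    apply hom1_ext c
    · intro I
      exact S.tgt_i I
    · intro I x hx hx'
      exact (Sk_congr c S (congrArg S.i (hx.trans (S.tgt_i I)).symm) rfl hx
        (S.tgt_i (c x)).symm).trans (S.id_left x)
  counit_right := by
    apply hom1_ext c
    · intro I
      rfl
    · intro I x hx hx'
      exact S.id_right x
  coassoc := by
    apply hom3_ext c
    · intro I
      rfl
    · intro I x hx hx'
      rfl
    · intro I x hx hx' y hy hy'
      exact S.tgt_k x y hy
    · intro I x hx hx' y hy hy' z hz hz'
      exact S.assoc x y z hy hz'

end Backward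

/- ### The round trips -/

lemma com_ext {M N : ComonoidStr (P c)} (h1 : M.counit = N.counit)
    (h2 : M.comul = N.comul) : M = N := by
  cases M
  cases N
  dsimp at h1 h2
  subst h1
  subst h2
  rfl

lemma left_inv (M : ComonoidStr (P c)) : toCom c (toCat c M) = M := by
  apply com_ext c
  · exact homy_ext c fun I => rfl
  · apply hom2_ext c
    · intro I
      exact (pos1 c M I).symm
    · intro I x hx hx'
      exact (t_eq c M x hx.symm hx').symm
    · intro I x hx hx' y hy hy'
      exact (k_gen c M x y hx.symm hx' hy' hy).symm

lemma right_inv (S : CatStr c) : toCat c (toCom c S) = S := rfl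

end CE

/-- Comonoid structures on the polynomial `c : C* → C` (with positions `C` and directions the
fibers of `c`) with respect to the composition product are in bijection with small category
structures with object set `C`, morphism set `C*`, and source map `c`. -/
theorem comonoid_equiv_category {Cstar C : Type u} (c : Cstar → C) :
    Nonempty (ComonoidStr ⟨C, fun I => {x : Cstar // c x = I}⟩ ≃ CatStr c) := by
  exact ⟨{ toFun := CE.toCat c, invFun := CE.toCom c,
           left_inv := CE.left_inv c, right_inv := CE.right_inv c }⟩
end

section
/- For a comonoid c in Poly_Set (equivalently, a small category C by the Ahman–Uustalu correspondence), the category of c-coalgebras — sets S with κ : S → P(c)(S) satisfying counit and comultiplication equations — is equivalent to the category of functors C → Set (copresheaves on C). -/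
open CategoryTheory

universe u

/-- A coalgebra for the comonad on `Set` induced by the polynomial comonoid corresponding to
a small category `C` (Ahman–Uustalu): a set `S` with `κ : S → P(c)(S)`, i.e. a labelling
`π : S → C₀` together with an action of arrows out of `π s`, satisfying the counit equation
(identities act trivially) and the comultiplication equations (targets and functoriality). -/
structure Coalg (C : Type u) [Category.{u} C] : Type (u + 1) where
  S : Type u
  π : S → C
  act : (s : S) → (J : C) → (π s ⟶ J) → S
  act_pos : ∀ s J f, π (act s J f) = J
  act_id : ∀ s, act s (π s) (𝟙 (π s)) = s
  act_comp : ∀ s J (f : π s ⟶ J) K (g : J ⟶ K),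
    act s K (f ≫ g) = act (act s J f) K (eqToHom (act_pos s J f) ≫ g)

/-- A homomorphism of coalgebras: a function commuting with the structure maps `κ`. -/
@[ext]
structure PCoalgHom {C : Type u} [Category.{u} C] (X Y : Coalg C) : Type u where
  toFun : X.S → Y.S
  map_pos : ∀ s, Y.π (toFun s) = X.π s
  map_act : ∀ s J (f : X.π s ⟶ J),
    toFun (X.act s J f) = Y.act (toFun s) J (eqToHom (map_pos s) ≫ f)

/-- The category of `c`-coalgebras. -/
instance (C : Type u) [Category.{u} C] : Category (Coalg C) where
  Hom := PCoalgHom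
  id X :=
    { toFun := id
      map_pos := fun _ => rfl
      map_act := fun s J f => by simp }
  comp {X Y Z} F G :=
    { toFun := G.toFun ∘ F.toFun
      map_pos := fun s => (G.map_pos _).trans (F.map_pos s)
      map_act := fun s J f => by
        simp [Function.comp, F.map_act, G.map_act, eqToHom_trans] }
  id_comp f := PCoalgHom.ext rfl
  comp_id f := PCoalgHom.ext rfl
  assoc f g h := PCoalgHom.ext rfl

/-! A coalgebra is a type fibred over the objects of `C` on which arrows act, i.e. a discrete
opfibration over `C`. Its fibres `{s // π s = J}` form a copresheaf; conversely the total space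
`Σ J, F J` of a copresheaf carries the action by `F.map`. The two constructions are mutually
inverse through the canonical bijection `Σ J, {s // π s = J} ≃ S`. -/

namespace Coalg

variable {C : Type u} [Category.{u} C]

@[ext]
theorem hom_ext {X Y : Coalg C} {φ ψ : X ⟶ Y} (h : φ.toFun = ψ.toFun) : φ = ψ :=
  PCoalgHom.ext h

@[simp]
theorem act_eqToHom (X : Coalg C) (s : X.S) {J : C} (h : X.π s = J) :
    X.act s J (eqToHom h) = s := by
  cases h
  exact X.act_id s

def toCopresheaf (X : Coalg C) : C ⥤ Type u where
  obj J := { s : X.S // X.π s = J }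
  map {_ K} f := TypeCat.ofHom fun s => ⟨X.act s.1 K (eqToHom s.2 ≫ f), X.act_pos _ _ _⟩
  map_id J := by
    ext s
    simp
  map_comp {_ K L} f g := by
    ext s
    change X.act s.1 L (eqToHom s.2 ≫ f ≫ g) =
      X.act (X.act s.1 K (eqToHom s.2 ≫ f)) L (eqToHom (X.act_pos _ _ _) ≫ g)
    rw [← Category.assoc, X.act_comp]

@[simp]
theorem toCopresheaf_map_coe (X : Coalg C) {J K : C} (f : J ⟶ K) (s : X.toCopresheaf.obj J) :
    Subtype.val (X.toCopresheaf.map f s) = X.act s.1 K (eqToHom s.2 ≫ f) :=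
  rfl

abbrev ofCopresheaf (F : C ⥤ Type u) : Coalg C where
  S := Σ J : C, F.obj J
  π s := s.1
  act s J f := ⟨J, F.map f s.2⟩
  act_pos _ _ _ := rfl
  act_id s := by simp
  act_comp s J f K g := by simp

def toCopresheafFunctor : Coalg C ⥤ (C ⥤ Type u) where
  obj := toCopresheaf
  map {X Y} φ :=
    { app J := TypeCat.ofHom fun s => ⟨φ.toFun s.1, (φ.map_pos s.1).trans s.2⟩
      naturality {_ K} f := by
        ext s
        apply Subtype.ext
        change φ.toFun (X.act s.1 K (eqToHom s.2 ≫ f)) =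
          Y.act (φ.toFun s.1) K (eqToHom ((φ.map_pos s.1).trans s.2) ≫ f)
        simp [φ.map_act, eqToHom_trans_assoc] }

def ofCopresheafFunctor : (C ⥤ Type u) ⥤ Coalg C where
  obj := ofCopresheaf
  map {F G} α :=
    { toFun := fun s => ⟨s.1, α.app s.1 s.2⟩
      map_pos := fun _ => rfl
      map_act := fun ⟨_, x⟩ J f => by
        simp [NatTrans.naturality_apply] }

def isoOfCopresheafToCopresheaf (X : Coalg C) : X ≅ ofCopresheaf (toCopresheaf X) where
  hom :=
    { toFun := fun s => ⟨X.π s, ⟨s, rfl⟩⟩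
      map_pos := fun _ => rfl
      map_act := fun s J f => Sigma.subtype_ext (X.act_pos s J f) <| by
        change X.act s J f = X.act s J (eqToHom rfl ≫ eqToHom rfl ≫ f)
        simp }
  inv :=
    { toFun := fun s => s.2.1
      map_pos := fun s => s.2.2
      map_act := fun ⟨_, _⟩ _ _ => by simp }
  hom_inv_id := rfl
  inv_hom_id := hom_ext <| funext fun ⟨_, _, h⟩ => Sigma.subtype_ext h rfl

def toCopresheafOfCopresheafIso (F : C ⥤ Type u) : toCopresheaf (ofCopresheaf F) ≅ F :=
  NatIso.ofComponents
    (fun J =>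
      { hom := TypeCat.ofHom fun s => cast (congrArg F.obj s.2) s.1.2
        inv := TypeCat.ofHom fun x => ⟨⟨J, x⟩, rfl⟩
        hom_inv_id := by
          ext ⟨⟨_, _⟩, h⟩
          cases h
          rfl
        inv_hom_id := rfl })
    (fun f => by
      ext ⟨⟨_, x⟩, h⟩
      cases h
      simp [toCopresheaf])

def equivCopresheaves : Coalg C ≌ C ⥤ Type u where
  functor := toCopresheafFunctor
  inverse := ofCopresheafFunctor
  unitIso := NatIso.ofComponents isoOfCopresheafToCopresheaf fun {_ Y} φ =>
    hom_ext (funext fun s => Sigma.subtype_ext (φ.map_pos s) rfl)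
  counitIso := NatIso.ofComponents toCopresheafOfCopresheafIso fun _ => by
    ext _ ⟨⟨_, _⟩, h⟩
    cases h
    rfl
  functor_unitIso_comp X := by
    ext _ ⟨s, h⟩
    cases h
    rfl

end Coalg

/-- For a polynomial comonoid in `Set`, equivalently a small category `C`, the category of
coalgebras is equivalent to the category of copresheaves `C ⥤ Set`. -/
theorem coalg_equiv_copresheaves (C : Type u) [Category.{u} C] :
    Nonempty (Coalg C ≌ C ⥤ Type u) :=
  ⟨Coalg.equivCopresheaves⟩
end
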